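/- Let X be a finitely generated module over the Iwasawa algebra Λ = ℤ_ℓ[[X]] and let T be its largest finite Λ-submodule (T is finite and contains every finite Λ-submodule of X). Then there exists N ∈ ℕ such that for every n ≥ N there exists M(n) ≥ n such that for all m ≥ M(n), the kernel of the Λ-linear map X/ω_n X → X/ω_m X induced by multiplication by ν_{m,n} is exactly (T + ω_n X)/ω_n X. -/

import Mathlib

open PowerSeries in
/-- `ω_n = (1+X)^(ℓ^n) - 1` in the Iwasawa algebra `Λ = ℤ_ℓ[[X]]`. -/
noncomputable def omegaIw (ℓ : ℕ) [Fact ℓ.Prime] (n : ℕ) : PowerSeries ℤ_[ℓ] :=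
  (1 + PowerSeries.X) ^ ℓ ^ n - 1

/-- `ν_{m,n} = ∑_{j<ℓ^(m-n)} (1+X)^(j·ℓ^n)` in `Λ = ℤ_ℓ[[X]]`, so that `ω_m = ν_{m,n}·ω_n`. -/
noncomputable def nuIw (ℓ : ℕ) [Fact ℓ.Prime] (n m : ℕ) : PowerSeries ℤ_[ℓ] :=
  ∑ j ∈ Finset.range (ℓ ^ (m - n)), (1 + PowerSeries.X) ^ (j * ℓ ^ n)

/-- The submodule `ω_n X` of a `Λ`-module `X`. -/
noncomputable def omegaSub (ℓ : ℕ) [Fact ℓ.Prime] (n : ℕ)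
    (X : Type*) [AddCommGroup X] [Module (PowerSeries ℤ_[ℓ]) X] :
    Submodule (PowerSeries ℤ_[ℓ]) X :=
  LinearMap.range (LinearMap.lsmul (PowerSeries ℤ_[ℓ]) X (omegaIw ℓ n))

/-!
`Λ` is a Noetherian local ring with maximal ideal `𝔪 = (ℓ, X)` and finite residue field, so a
cyclic `Λ`-module is finite iff it is killed by a power of `𝔪`. Since `ω_{n+1} = ν_{n,n+1} ω_n`
and `ν_{n,m} ≡ ℓ^{m-n} mod ω_n`, the elements `ω_n` and `ν_{n,m}` lie in `𝔪^k` once `n` and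
`m - n` are large, so they kill `T`; this puts `T` in the kernel. Conversely, if
`ν_{n,m} x = ω_m y`, then `z = x - ω_n y` is killed by `ν_{n,m}`, hence by `ω_m`, hence by `ω_n`
because the kernels of the `ω_m` stabilise. As `ω_n ≡ X^{ℓ^n} mod ℓ`, the ideal `(ω_n, ν_{n,m})`
has radical `𝔪`, so `Λ z` is finite and `z ∈ T`.
-/

open IsLocalRing

namespace PowerSeries

variable {R : Type*} [CommRing R]

instance isLocalHom_constantCoeff : IsLocalHom (constantCoeff : R⟦X⟧ →+* R) :=
  ⟨fun _ => isUnit_iff_constantCoeff.2⟩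

variable [IsLocalRing R]

theorem mem_maximalIdeal_iff {f : R⟦X⟧} :
    f ∈ maximalIdeal R⟦X⟧ ↔ constantCoeff f ∈ maximalIdeal R := by
  simp only [IsLocalRing.mem_maximalIdeal, mem_nonunits_iff, isUnit_iff_constantCoeff]

theorem maximalIdeal_eq_map_C_sup_span_X :
    maximalIdeal R⟦X⟧ = (maximalIdeal R).map C ⊔ Ideal.span {X} := by
  refine le_antisymm (fun f hf => ?_) (sup_le (Ideal.map_le_iff_le_comap.2 fun a ha => ?_) ?_)
  · rw [eq_X_mul_shift_add_const f]
    exact add_mem (Ideal.mem_sup_right (Ideal.mem_span_singleton.2 (dvd_mul_right _ _)))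
      (Ideal.mem_sup_left (Ideal.mem_map_of_mem _ (mem_maximalIdeal_iff.1 hf)))
  · rwa [Ideal.mem_comap, mem_maximalIdeal_iff, constantCoeff_C]
  · rw [Ideal.span_le, Set.singleton_subset_iff, SetLike.mem_coe, mem_maximalIdeal_iff,
      constantCoeff_X]
    exact zero_mem _

instance [Finite (ResidueField R)] : Finite (ResidueField R⟦X⟧) :=
  Finite.of_injective _ (ResidueField.map (constantCoeff : R⟦X⟧ →+* R)).injective

end PowerSeries

instance PadicInt.finite_residueField (p : ℕ) [Fact p.Prime] : Finite (ResidueField ℤ_[p]) :=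
  Finite.of_equiv _ PadicInt.residueField.symm.toEquiv

namespace IsLocalRing

variable {R M : Type*} [CommRing R] [IsLocalRing R] [IsNoetherianRing R]
  [Finite (ResidueField R)] [AddCommGroup M] [Module R M]

theorem finite_span_singleton_iff {z : M} :
    ((R ∙ z : Submodule R M) : Set M).Finite ↔
      ∃ k, maximalIdeal R ^ k ≤ Ideal.torsionOf R M z := by
  rw [← finite_quotient_iff, Set.finite_coe_iff.symm]
  exact (Ideal.quotTorsionOfEquivSpanSingleton R M z).toEquiv.finite_iff.symm

theorem exists_maximalIdeal_pow_smul_eq_zero {T : Submodule R M} (hT : (T : Set M).Finite) :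
    ∃ k, ∀ r ∈ maximalIdeal R ^ k, ∀ t ∈ T, r • t = 0 := by
  choose! e he using fun t (ht : t ∈ T) =>
    finite_span_singleton_iff.1 (hT.subset ((Submodule.span_singleton_le_iff_mem t T).2 ht))
  refine ⟨hT.toFinset.sup e, fun r hr t ht => (Ideal.mem_torsionOf_iff t r).1 (he t ht ?_)⟩
  exact Ideal.pow_le_pow_right (Finset.le_sup (hT.mem_toFinset.2 ht)) hr

end IsLocalRing

theorem exists_smul_eq_zero_imp_of_dvd {R M : Type*} [CommRing R] [AddCommGroup M] [Module R M]
    [IsNoetherian R M] (a : ℕ → R) (ha : ∀ n m, n ≤ m → a n ∣ a m) :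
    ∃ N, ∀ n m, N ≤ n → N ≤ m → ∀ z : M, a m • z = 0 → a n • z = 0 := by
  obtain ⟨N, hN⟩ := monotone_stabilizes_iff_noetherian.mpr inferInstance
    ⟨fun n => LinearMap.ker (LinearMap.lsmul R M (a n)), fun n m h z hz => by
      obtain ⟨c, hc⟩ := ha n m h
      simp_all [mul_comm _ c, mul_smul]⟩
  exact ⟨N, fun n m hn hm z => (SetLike.ext_iff.1 ((hN n hn).symm.trans (hN m hm)) z).2⟩

open PowerSeries

section Iwasawa

variable (ℓ : ℕ) [Fact ℓ.Prime]

local notation "Λ" => PowerSeries ℤ_[ℓ]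

theorem maximalIdeal_eq_span_p_X : maximalIdeal Λ = Ideal.span {(ℓ : Λ), X} := by
  rw [maximalIdeal_eq_map_C_sup_span_X, PadicInt.maximalIdeal_eq_span_p, Ideal.map_span,
    Set.image_singleton, map_natCast, Ideal.span_insert]

theorem omegaIw_eq_nuIw_mul {n m : ℕ} (h : n ≤ m) :
    omegaIw ℓ m = nuIw ℓ n m * omegaIw ℓ n := by
  have h1 : ((1 + X : Λ) ^ ℓ ^ n) ^ ℓ ^ (m - n) = (1 + X) ^ ℓ ^ m := by
    rw [← pow_mul, ← pow_add, Nat.add_sub_cancel' h]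
  have h2 : nuIw ℓ n m = ∑ j ∈ Finset.range (ℓ ^ (m - n)), ((1 + X : Λ) ^ ℓ ^ n) ^ j :=
    Finset.sum_congr rfl fun j _ => by rw [← pow_mul, mul_comm]
  rw [omegaIw, ← h1, ← geom_sum_mul, h2, omegaIw]

theorem omegaIw_dvd {n m : ℕ} (h : n ≤ m) : omegaIw ℓ n ∣ omegaIw ℓ m :=
  Dvd.intro_left _ (omegaIw_eq_nuIw_mul ℓ h).symm

theorem nuIw_sub_pow_mem_span (n m : ℕ) :
    nuIw ℓ n m - (ℓ : Λ) ^ (m - n) ∈ Ideal.span {omegaIw ℓ n} := by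
  have h : nuIw ℓ n m - (ℓ : Λ) ^ (m - n) =
      ∑ j ∈ Finset.range (ℓ ^ (m - n)), (((1 + X : Λ) ^ ℓ ^ n) ^ j - 1 ^ j) := by
    simp [nuIw, Finset.sum_sub_distrib, ← pow_mul, mul_comm]
  rw [h, Ideal.mem_span_singleton]
  exact Finset.dvd_sum fun j _ => sub_dvd_pow_sub_pow _ _ j

theorem omegaIw_sub_X_pow_mem_span (n : ℕ) :
    omegaIw ℓ n - X ^ ℓ ^ n ∈ Ideal.span {(ℓ : Λ)} := by
  obtain ⟨r, hr⟩ := exists_add_pow_prime_pow_eq (Fact.out : ℓ.Prime) (1 : Λ) X n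
  exact Ideal.mem_span_singleton'.2 ⟨X * r, by rw [omegaIw, hr]; ring⟩

theorem nuIw_mem_maximalIdeal_pow {k n m : ℕ} (hω : omegaIw ℓ n ∈ maximalIdeal Λ ^ k)
    (hk : k ≤ m - n) : nuIw ℓ n m ∈ maximalIdeal Λ ^ k := by
  have hℓ : (ℓ : Λ) ∈ maximalIdeal Λ := by
    rw [maximalIdeal_eq_span_p_X]
    exact Ideal.subset_span (by simp)
  simpa using add_mem (Ideal.pow_le_pow_right hk (Ideal.pow_mem_pow hℓ (m - n)))
    ((Ideal.span_singleton_le_iff_mem _).2 hω (nuIw_sub_pow_mem_span ℓ n m))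

theorem omegaIw_mem_maximalIdeal_pow (n : ℕ) : omegaIw ℓ n ∈ maximalIdeal Λ ^ (n + 1) := by
  induction n with
  | zero =>
    rw [maximalIdeal_eq_span_p_X]
    simpa [omegaIw] using Ideal.subset_span (by simp)
  | succ n ih =>
    have hν : nuIw ℓ n (n + 1) ∈ maximalIdeal Λ ^ 1 :=
      nuIw_mem_maximalIdeal_pow ℓ (by simpa using Ideal.pow_le_self n.succ_ne_zero ih) (by omega)
    rw [omegaIw_eq_nuIw_mul ℓ n.le_succ, pow_succ']
    exact Ideal.mul_mem_mul (by simpa using hν) ih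

theorem maximalIdeal_le_radical_span_omegaIw_nuIw (n m : ℕ) :
    maximalIdeal Λ ≤ (Ideal.span {omegaIw ℓ n, nuIw ℓ n m}).radical := by
  set I := Ideal.span {omegaIw ℓ n, nuIw ℓ n m}
  have hω : omegaIw ℓ n ∈ I := Ideal.subset_span (by simp)
  have hν : nuIw ℓ n m ∈ I := Ideal.subset_span (by simp)
  have hℓ : (ℓ : Λ) ∈ I.radical := by
    refine Ideal.mem_radical_of_pow_mem (m := m - n + 1) (I.le_radical ?_)
    rw [pow_succ]
    refine I.mul_mem_right _ ?_
    simpa using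
      I.sub_mem hν ((Ideal.span_singleton_le_iff_mem _).2 hω (nuIw_sub_pow_mem_span ℓ n m))
  have hX : X ∈ I.radical := by
    refine Ideal.mem_radical_of_pow_mem (m := ℓ ^ n) ?_
    simpa using I.radical.sub_mem (I.le_radical hω)
      ((Ideal.span_singleton_le_iff_mem _).2 hℓ (omegaIw_sub_X_pow_mem_span ℓ n))
  rw [maximalIdeal_eq_span_p_X, Ideal.span_le]
  simp [Set.insert_subset_iff, hℓ, hX]

variable {M : Type*} [AddCommGroup M] [Module ℤ_[ℓ]⟦X⟧ M]

theorem finite_span_singleton_of_omegaIw_smul_of_nuIw_smul {n m : ℕ} {z : M}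
    (hω : omegaIw ℓ n • z = 0) (hν : nuIw ℓ n m • z = 0) :
    ((Λ ∙ z : Submodule Λ M) : Set M).Finite := by
  obtain ⟨k, hk⟩ := Ideal.exists_pow_le_of_le_radical_of_fg
    (maximalIdeal_le_radical_span_omegaIw_nuIw ℓ n m) (IsNoetherian.noetherian _)
  refine finite_span_singleton_iff.2 ⟨k, hk.trans (Ideal.span_le.2 ?_)⟩
  simp [Set.insert_subset_iff, hω, hν]

theorem mem_omegaSub {n : ℕ} {x : M} : x ∈ omegaSub ℓ n M ↔ ∃ y, omegaIw ℓ n • y = x :=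
  Iff.rfl

end Iwasawa

/-- Let `X` be a finitely generated module over `Λ = ℤ_ℓ[[X]]` and `T` its
largest finite `Λ`-submodule.  Then for all `n ≥ N` and `m ≥ M(n)`, the kernel of the map
`X/ω_n X → X/ω_m X` induced by multiplication by `ν_{m,n}` is exactly `(T + ω_n X)/ω_n X`;
elementwise: the class of `x` lies in the kernel (i.e. `ν_{m,n}·x ∈ ω_m X`) iff
`x ∈ T + ω_n X`. -/
theorem capitulation_kernel_eq_largest_finite_submodule
    (ℓ : ℕ) [Fact ℓ.Prime]
    (X : Type*) [AddCommGroup X] [Module (PowerSeries ℤ_[ℓ]) X]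
    [Module.Finite (PowerSeries ℤ_[ℓ]) X]
    (T : Submodule (PowerSeries ℤ_[ℓ]) X) (hTfin : (T : Set X).Finite)
    (hTmax : ∀ S : Submodule (PowerSeries ℤ_[ℓ]) X, (S : Set X).Finite → S ≤ T) :
    ∃ N : ℕ, ∀ n, N ≤ n → ∃ M, n ≤ M ∧ ∀ m, M ≤ m → ∀ x : X,
      (nuIw ℓ n m • x ∈ omegaSub ℓ m X) ↔ x ∈ T ⊔ omegaSub ℓ n X := by
  obtain ⟨k, hk⟩ := exists_maximalIdeal_pow_smul_eq_zero hTfin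
  obtain ⟨N₀, hN₀⟩ := exists_smul_eq_zero_imp_of_dvd (M := X) _ fun _ _ => omegaIw_dvd ℓ
  refine ⟨max k N₀, fun n hn => ⟨n + k, by omega, fun m hm x => ⟨fun hx => ?_, fun hx => ?_⟩⟩⟩
  · obtain ⟨y, hy⟩ := (mem_omegaSub ℓ).1 hx
    have hν : nuIw ℓ n m • (x - omegaIw ℓ n • y) = 0 := by
      rw [smul_sub, smul_smul, ← omegaIw_eq_nuIw_mul ℓ (by omega), hy, sub_self]
    have hω : omegaIw ℓ n • (x - omegaIw ℓ n • y) = 0 := by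
      refine hN₀ n m (by omega) (by omega) _ ?_
      rw [omegaIw_eq_nuIw_mul ℓ (show n ≤ m by omega), mul_comm, mul_smul, hν, smul_zero]
    have hT := hTmax _ (finite_span_singleton_of_omegaIw_smul_of_nuIw_smul ℓ hω hν)
      (Submodule.mem_span_singleton_self _)
    exact Submodule.mem_sup.2 ⟨_, hT, _, (mem_omegaSub ℓ).2 ⟨y, rfl⟩, sub_add_cancel _ _⟩
  · obtain ⟨t, ht, _, hw, rfl⟩ := Submodule.mem_sup.1 hx
    obtain ⟨y, rfl⟩ := (mem_omegaSub ℓ).1 hw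
    have hν : nuIw ℓ n m ∈ maximalIdeal (PowerSeries ℤ_[ℓ]) ^ k :=
      nuIw_mem_maximalIdeal_pow ℓ
        (Ideal.pow_le_pow_right (by omega) (omegaIw_mem_maximalIdeal_pow ℓ n)) (by omega)
    refine (mem_omegaSub ℓ).2 ⟨y, ?_⟩
    rw [smul_add, hk _ hν t ht, zero_add, smul_smul, ← omegaIw_eq_nuIw_mul ℓ (by omega)]
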